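/- Let l ≥ 1 and let R = {±e_i : 1 ≤ i ≤ l} ∪ {±2e_i : 1 ≤ i ≤ l} ∪ {±e_i ± e_j : 1 ≤ i < j ≤ l} ⊂ ℝˡ be the (nonreduced) root system of type BC_l. Then every parabolic subset of R is a principal parabolic subset, i.e. for every parabolic P ⊆ R there exists a linear functional λ on ℝˡ with P = {α ∈ R : λ(α) ≥ 0}. -/

import Mathlib

/-- A subset `P` of `Δ` is *parabolic* if `P ∪ (−P) = Δ` and `P` is closed. -/
def IsParabolicIn {V : Type*} [AddCommGroup V] (Δ P : Set V) : Prop :=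
  P ∪ (-P) = Δ ∧ ∀ α ∈ P, ∀ β ∈ P, α + β ∈ Δ → α + β ∈ P

/-- `P` is *principal parabolic* in `Δ` if `P = {α ∈ Δ | λ α ≥ 0}` for some linear
functional `λ`. -/
def IsPrincipalParabolicIn {V : Type*} [AddCommGroup V] [Module ℝ V] (Δ P : Set V) : Prop :=
  ∃ l : V →ₗ[ℝ] ℝ, P = {α ∈ Δ | 0 ≤ l α}

/-- The standard basis vector `e i` of `ℝˡ`. -/
def stdBasis (l : ℕ) (i : Fin l) : Fin l → ℝ := Pi.single i 1

/-- The nonreduced root system of type `BC_l`: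
`{±e_i} ∪ {±2e_i} ∪ {±e_i ± e_j : i < j}`. -/
def BCRoots (l : ℕ) : Set (Fin l → ℝ) :=
  {v | (∃ i : Fin l, v = stdBasis l i ∨ v = -stdBasis l i ∨
          v = (2 : ℝ) • stdBasis l i ∨ v = -((2 : ℝ) • stdBasis l i)) ∨
       (∃ i j : Fin l, i < j ∧
          (v = stdBasis l i + stdBasis l j ∨ v = stdBasis l i - stdBasis l j ∨
           v = -stdBasis l i + stdBasis l j ∨ v = -stdBasis l i - stdBasis l j))}

/-!
Every root of `BC_l` is a difference `u - v` of two distinct elements of `W = {0, ±e_i}`. A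
parabolic `P` therefore induces the relation `u ≼ v ↔ u = v ∨ u - v ∈ P` on `W`, which is total
because `P ∪ -P` is everything and transitive because `P` is closed; it is also reversed by
negation. Counting upper sets ranks `≼` by an odd function `c : W → ℝ`, and every odd function on
`{0, ±e_i}` is the restriction of a linear functional `λ`. Then `λ (u - v) = c u - c v` is
nonnegative exactly when `u - v ∈ P`.
-/

open Set Pointwise

lemma Set.Finite.rel_iff_ncard_le {α : Type*} {s : Set α} {r : α → α → Prop} (hs : s.Finite)
    (htotal : ∀ u ∈ s, ∀ v ∈ s, r u v ∨ r v u)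
    (htrans : ∀ u ∈ s, ∀ v ∈ s, ∀ w ∈ s, r u v → r v w → r u w)
    {u v : α} (hu : u ∈ s) (hv : v ∈ s) :
    r u v ↔ {w ∈ s | r v w}.ncard ≤ {w ∈ s | r u w}.ncard := by
  refine ⟨fun huv => ncard_le_ncard (fun w ⟨hw, hvw⟩ => ⟨hw, htrans u hu v hv w hw huv hvw⟩)
    (hs.subset (sep_subset _ _)), fun hle => ?_⟩
  by_contra huv
  have hvu : r v u := (htotal u hu v hv).resolve_left huv
  have hsub : {w ∈ s | r u w} ⊆ {w ∈ s | r v w} := fun w h =>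
    ⟨h.1, htrans v hv u hu w h.1 hvu h.2⟩
  have hssub : {w ∈ s | r u w} ⊂ {w ∈ s | r v w} :=
    (ssubset_iff_of_subset hsub).2 ⟨v, ⟨hv, (htotal v hv v hv).elim id id⟩, fun h => huv h.2⟩
  exact (ncard_lt_ncard hssub (hs.subset (sep_subset _ _))).not_ge hle

/-- `c u = #{w | u ≼ w} - #{w | -u ≼ w}` is odd, and it still represents `≼` because `≼` is
reversed by negation. -/
lemma exists_odd_rank {V : Type*} [InvolutiveNeg V] {S : Set V} {r : V → V → Prop}
    (hS : S.Finite) (hneg : ∀ v ∈ S, -v ∈ S)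
    (htotal : ∀ u ∈ S, ∀ v ∈ S, r u v ∨ r v u)
    (htrans : ∀ u ∈ S, ∀ v ∈ S, ∀ w ∈ S, r u v → r v w → r u w)
    (hr_neg : ∀ u v, r u v → r (-v) (-u)) :
    ∃ c : V → ℝ, (∀ v, c (-v) = -c v) ∧ ∀ u ∈ S, ∀ v ∈ S, (r u v ↔ c v ≤ c u) := by
  set N : V → ℝ := fun u => ({w ∈ S | r u w}.ncard : ℝ)
  refine ⟨fun u => N u - N (-u), fun v => by simp only [neg_neg]; ring, fun u hu v hv => ?_⟩
  have hpos : r u v ↔ N v ≤ N u := by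
    simpa [N] using hS.rel_iff_ncard_le htotal htrans hu hv
  have hneg' : r u v ↔ N (-u) ≤ N (-v) := by
    rw [show r u v ↔ r (-v) (-u) from ⟨hr_neg u v, fun h => by simpa using hr_neg _ _ h⟩,
      hS.rel_iff_ncard_le htotal htrans (hneg v hv) (hneg u hu)]
    simp only [N, Nat.cast_le]
  constructor
  · intro h
    linarith [hpos.1 h, hneg'.1 h]
  · intro h
    by_contra hc
    linarith [not_le.1 (hpos.not.1 hc), not_le.1 (hneg'.not.1 hc)]

section Differences

variable {V : Type*} [AddCommGroup V] {S P : Set V}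

lemma sub_mem_sub_diff_zero {u v : V} (hu : u ∈ S) (hv : v ∈ S) (huv : u ≠ v) :
    u - v ∈ (S - S) \ {0} :=
  ⟨sub_mem_sub hu hv, sub_ne_zero.2 huv⟩

lemma IsParabolicIn.sub_total (hP : IsParabolicIn ((S - S) \ {0}) P) {u v : V}
    (hu : u ∈ S) (hv : v ∈ S) : (u = v ∨ u - v ∈ P) ∨ (v = u ∨ v - u ∈ P) := by
  by_cases huv : u = v
  · exact .inl (.inl huv)
  have h := sub_mem_sub_diff_zero hu hv huv
  rw [← hP.1] at h
  rcases h with h | h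
  · exact .inl (.inr h)
  · exact .inr (.inr (by simpa using h))

lemma IsParabolicIn.sub_trans (hP : IsParabolicIn ((S - S) \ {0}) P) {u v w : V}
    (hu : u ∈ S) (hw : w ∈ S) (huv : u = v ∨ u - v ∈ P) (hvw : v = w ∨ v - w ∈ P) :
    u = w ∨ u - w ∈ P := by
  rcases huv with rfl | huv
  · exact hvw
  rcases hvw with rfl | hvw
  · exact .inr huv
  by_cases huw : u = w
  · exact .inl huw
  have hsum : u - w = (u - v) + (v - w) := by abel
  exact .inr (hsum ▸ hP.2 _ huv _ hvw (hsum ▸ sub_mem_sub_diff_zero hu hw huw))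

theorem isPrincipalParabolicIn_sub_diff_zero [Module ℝ V] (hS : S.Finite)
    (hneg : ∀ v ∈ S, -v ∈ S)
    (hext : ∀ c : V → ℝ, (∀ v, c (-v) = -c v) → ∃ f : V →ₗ[ℝ] ℝ, ∀ v ∈ S, f v = c v)
    (hP : IsParabolicIn ((S - S) \ {0}) P) :
    IsPrincipalParabolicIn ((S - S) \ {0}) P := by
  obtain ⟨c, hc_odd, hc⟩ := exists_odd_rank (r := fun u v => u = v ∨ u - v ∈ P) hS hneg
    (fun u hu v hv => hP.sub_total hu hv) (fun u hu v _ w hw => hP.sub_trans hu hw)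
    (fun u v h => by simpa [neg_add_eq_sub, eq_comm] using h)
  obtain ⟨f, hf⟩ := hext c hc_odd
  have hf_sub {u v : V} (hu : u ∈ S) (hv : v ∈ S) : f (u - v) = c u - c v := by
    rw [map_sub, hf u hu, hf v hv]
  refine ⟨f, Set.ext fun α => ⟨fun hα => ?_, fun ⟨hα, hfα⟩ => ?_⟩⟩
  · obtain ⟨⟨u, hu, v, hv, rfl⟩, hne⟩ : α ∈ (S - S) \ {0} := hP.1 ▸ Or.inl hα
    refine ⟨⟨⟨u, hu, v, hv, rfl⟩, hne⟩, ?_⟩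
    rw [hf_sub hu hv, sub_nonneg]
    exact (hc u hu v hv).1 (.inr hα)
  · obtain ⟨⟨u, hu, v, hv, rfl⟩, hne⟩ := hα
    rw [hf_sub hu hv, sub_nonneg] at hfα
    rcases (hc u hu v hv).2 hfα with rfl | h
    · simp at hne
    · exact h

end Differences

lemma Module.Basis.exists_linearMap_eq_of_odd {ι V : Type*} [AddCommGroup V] [Module ℝ V]
    (b : Module.Basis ι ℝ V) {c : V → ℝ} (hc : ∀ v, c (-v) = -c v) :
    ∃ f : V →ₗ[ℝ] ℝ, ∀ v ∈ insert 0 (range b ∪ range fun i => -b i), f v = c v := by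
  have hc0 : c 0 = 0 := by linarith [neg_zero (G := V) ▸ hc 0]
  refine ⟨b.constr ℝ (c ∘ b), ?_⟩
  rintro v (rfl | ⟨i, rfl⟩ | ⟨i, rfl⟩) <;> simp [hc0, hc]

section BC

variable {l : ℕ}

lemma stdBasis_eq_basisFun (l : ℕ) : stdBasis l = Pi.basisFun ℝ (Fin l) := by
  funext i
  simp [stdBasis]

lemma stdBasis_mem_BCRoots (i : Fin l) : stdBasis l i ∈ BCRoots l :=
  .inl ⟨i, .inl rfl⟩

lemma stdBasis_add_mem_BCRoots (i j : Fin l) : stdBasis l i + stdBasis l j ∈ BCRoots l := by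
  rcases lt_trichotomy i j with hij | rfl | hij
  · exact .inr ⟨i, j, hij, .inl rfl⟩
  · exact .inl ⟨i, .inr (.inr (.inl (two_smul ℝ _).symm))⟩
  · exact .inr ⟨j, i, hij, .inl (add_comm _ _)⟩

lemma stdBasis_sub_mem_BCRoots {i j : Fin l} (hij : i ≠ j) :
    stdBasis l i - stdBasis l j ∈ BCRoots l := by
  rcases hij.lt_or_gt with hij | hij
  · exact .inr ⟨i, j, hij, .inr (.inl rfl)⟩
  · exact .inr ⟨j, i, hij, .inr (.inr (.inl (sub_eq_neg_add _ _)))⟩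

lemma neg_stdBasis_sub_mem_BCRoots (i j : Fin l) : -stdBasis l i - stdBasis l j ∈ BCRoots l := by
  rcases lt_trichotomy i j with hij | rfl | hij
  · exact .inr ⟨i, j, hij, .inr (.inr (.inr rfl))⟩
  · exact .inl ⟨i, .inr (.inr (.inr (by rw [two_smul]; abel)))⟩
  · exact .inr ⟨j, i, hij, .inr (.inr (.inr (by abel)))⟩

lemma zero_notMem_BCRoots : (0 : Fin l → ℝ) ∉ BCRoots l := by
  rintro (⟨i, h⟩ | ⟨i, j, hij, h⟩)
  · rcases h with h | h | h | h <;> simpa [stdBasis] using congrFun h i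
  · rcases h with h | h | h | h <;> simpa [stdBasis, hij.ne] using congrFun h i

def BCWeights (l : ℕ) : Set (Fin l → ℝ) :=
  insert 0 (range (stdBasis l) ∪ range fun i => -stdBasis l i)

lemma finite_BCWeights (l : ℕ) : (BCWeights l).Finite :=
  ((finite_range _).union (finite_range _)).insert 0

lemma neg_mem_BCWeights {v : Fin l → ℝ} (hv : v ∈ BCWeights l) : -v ∈ BCWeights l := by
  rcases hv with rfl | ⟨i, rfl⟩ | ⟨i, rfl⟩
  · exact .inl neg_zero
  · exact .inr (.inr ⟨i, rfl⟩)
  · exact .inr (.inl ⟨i, (neg_neg _).symm⟩)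

lemma exists_linearMap_eq_on_BCWeights {c : (Fin l → ℝ) → ℝ} (hc : ∀ v, c (-v) = -c v) :
    ∃ f : (Fin l → ℝ) →ₗ[ℝ] ℝ, ∀ v ∈ BCWeights l, f v = c v := by
  rw [BCWeights, stdBasis_eq_basisFun]
  exact (Pi.basisFun ℝ (Fin l)).exists_linearMap_eq_of_odd hc

lemma sub_mem_BCRoots {u v : Fin l → ℝ} (hu : u ∈ BCWeights l) (hv : v ∈ BCWeights l)
    (huv : u ≠ v) : u - v ∈ BCRoots l := by
  rcases hu with rfl | ⟨i, rfl⟩ | ⟨i, rfl⟩ <;> rcases hv with rfl | ⟨j, rfl⟩ | ⟨j, rfl⟩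
  · exact absurd rfl huv
  · exact .inl ⟨j, .inr (.inl (zero_sub _))⟩
  · simpa using stdBasis_mem_BCRoots j
  · simpa using stdBasis_mem_BCRoots i
  · exact stdBasis_sub_mem_BCRoots fun h => huv (h ▸ rfl)
  · simpa using stdBasis_add_mem_BCRoots i j
  · exact .inl ⟨i, .inr (.inl (sub_zero _))⟩
  · exact neg_stdBasis_sub_mem_BCRoots i j
  · simpa [neg_add_eq_sub] using stdBasis_sub_mem_BCRoots fun h => huv (by rw [h])

lemma mem_sub_of_mem_BCRoots {x : Fin l → ℝ} (hx : x ∈ BCRoots l) :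
    x ∈ BCWeights l - BCWeights l := by
  have h0 : 0 ∈ BCWeights l := .inl rfl
  have he (i : Fin l) : stdBasis l i ∈ BCWeights l := .inr (.inl ⟨i, rfl⟩)
  have hne (i : Fin l) : -stdBasis l i ∈ BCWeights l := .inr (.inr ⟨i, rfl⟩)
  rw [Set.mem_sub]
  rcases hx with ⟨i, h | h | h | h⟩ | ⟨i, j, -, h | h | h | h⟩ <;> subst h
  · exact ⟨_, he i, 0, h0, sub_zero _⟩
  · exact ⟨_, hne i, 0, h0, sub_zero _⟩
  · exact ⟨_, he i, _, hne i, by rw [two_smul]; abel⟩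
  · exact ⟨_, hne i, _, he i, by rw [two_smul]; abel⟩
  · exact ⟨_, he i, _, hne j, sub_neg_eq_add _ _⟩
  · exact ⟨_, he i, _, he j, rfl⟩
  · exact ⟨_, he j, _, he i, by abel⟩
  · exact ⟨_, hne i, _, he j, rfl⟩

lemma BCRoots_eq_sub_diff_zero (l : ℕ) : BCRoots l = (BCWeights l - BCWeights l) \ {0} := by
  ext x
  refine ⟨fun hx => ⟨mem_sub_of_mem_BCRoots hx, fun h => zero_notMem_BCRoots (h ▸ hx)⟩, ?_⟩
  rintro ⟨⟨u, hu, v, hv, rfl⟩, hne⟩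
  exact sub_mem_BCRoots hu hv (sub_ne_zero.1 hne)

end BC

theorem BC_parabolic_is_principal_general (l : ℕ)
    (P : Set (Fin l → ℝ)) (hP : IsParabolicIn (BCRoots l) P) :
    IsPrincipalParabolicIn (BCRoots l) P := by
  rw [BCRoots_eq_sub_diff_zero] at hP ⊢
  exact isPrincipalParabolicIn_sub_diff_zero (finite_BCWeights l)
    (fun _ => neg_mem_BCWeights) (fun _ => exists_linearMap_eq_on_BCWeights) hP

/-- Every parabolic subset of the nonreduced root system `BC_l` is principal
parabolic. -/
theorem BC_parabolic_is_principal (l : ℕ) (hl : 1 ≤ l)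
    (P : Set (Fin l → ℝ)) (hP : IsParabolicIn (BCRoots l) P) :
    IsPrincipalParabolicIn (BCRoots l) P :=
  BC_parabolic_is_principal_general l P hP
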